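/- In the decoding setting, let {η_i : 0 ≤ i < γ} be a Gröbner basis of J = ker(ev) over 𝔽[x] with deg_ȳ(LT(η_i)) = i. Then Σ_{0≤i<γ} deg_x(LT(η_i)) = n. -/
import Mathlib


/-- The monomial support of an element of the free module `𝔽[x]^γ` (coordinates with
respect to the basis `ȳ_0, …, ȳ_{γ-1}` of `R̄` over `𝔽[x]`). -/
def msupp {𝔽 : Type*} [Field 𝔽] {γ : ℕ} (f : Fin γ → Polynomial 𝔽) : Set (ℕ × Fin γ) :=
  {m | (f m.2).coeff m.1 ≠ 0}

/-- `m` is the leading monomial of `f` with respect to the monomial order `le`. -/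
def IsLM {𝔽 : Type*} [Field 𝔽] {γ : ℕ} (le : ℕ × Fin γ → ℕ × Fin γ → Prop)
    (f : Fin γ → Polynomial 𝔽) (m : ℕ × Fin γ) : Prop :=
  m ∈ msupp f ∧ ∀ m' ∈ msupp f, le m' m

open Polynomial

namespace SumAux

variable {𝔽 : Type*} [Field 𝔽] {γ : ℕ}

noncomputable def mon (k : ℕ) (i : Fin γ) : Fin γ → Polynomial 𝔽 :=
  Pi.single i (X ^ k)

lemma coeff_mon (k : ℕ) (i j : Fin γ) (l : ℕ) :
    ((mon (𝔽 := 𝔽) k i) j).coeff l = if j = i ∧ l = k then 1 else 0 := by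
  unfold mon
  rcases eq_or_ne j i with rfl | h
  · simp [Pi.single_eq_same, coeff_X_pow]
  · simp [Pi.single_eq_of_ne h, h]

lemma msupp_finite (f : Fin γ → Polynomial 𝔽) : (msupp f).Finite := by
  classical
  apply Set.Finite.subset
    ((Set.finite_Iic (Finset.univ.sup fun j => (f j).natDegree)).prod Set.finite_univ)
  rintro ⟨l, j⟩ hm
  exact ⟨le_trans (Polynomial.le_natDegree_of_ne_zero hm)
    (Finset.le_sup (f := fun j => (f j).natDegree) (Finset.mem_univ j)), trivial⟩

lemma exists_max {α : Type*} (le : α → α → Prop)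
    (hrefl : ∀ m, le m m)
    (htot : ∀ m m', le m m' ∨ le m' m)
    (htrans : ∀ a b c, le a b → le b c → le a c)
    (s : Finset α) (hs : s.Nonempty) : ∃ m ∈ s, ∀ a ∈ s, le a m := by
  classical
  induction s using Finset.induction_on with
  | empty => simp at hs
  | @insert x s hx ih =>
    rcases s.eq_empty_or_nonempty with rfl | hs'
    · refine ⟨x, by simp, ?_⟩
      intro a ha
      simp only [Finset.mem_insert, Finset.notMem_empty, or_false] at ha
      subst ha; exact hrefl a
    · obtain ⟨m, hm, hmax⟩ := ih hs'
      rcases htot x m with h | h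
      · refine ⟨m, by simp [hm], ?_⟩
        intro a ha
        rcases Finset.mem_insert.1 ha with rfl | ha
        · exact h
        · exact hmax a ha
      · refine ⟨x, by simp, ?_⟩
        intro a ha
        rcases Finset.mem_insert.1 ha with rfl | ha
        · exact hrefl a
        · exact htrans a m x (hmax a ha) h

lemma compat' (le : ℕ × Fin γ → ℕ × Fin γ → Prop)
    (hcompat : ∀ (k k' : ℕ) (j j' : Fin γ), le (k, j) (k', j') → le (k + 1, j) (k' + 1, j')) :
    ∀ (t k k' : ℕ) (j j' : Fin γ), le (k, j) (k', j') → le (k + t, j) (k' + t, j') := by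
  intro t
  induction t with
  | zero => intro k k' j j' h; exact h
  | succ t ih =>
    intro k k' j j' h
    exact hcompat (k + t) (k' + t) j j' (ih k k' j j' h)

lemma reduce
    (le : ℕ × Fin γ → ℕ × Fin γ → Prop)
    (hrefl : ∀ m, le m m)
    (htot : ∀ m m', le m m' ∨ le m' m)
    (htrans : ∀ a b c, le a b → le b c → le a c)
    (hcompat : ∀ (k k' : ℕ) (j j' : Fin γ), le (k, j) (k', j') → le (k + 1, j) (k' + 1, j'))
    (hwf : WellFounded (fun a b => le a b ∧ a ≠ b))
    (J : Submodule (Polynomial 𝔽) (Fin γ → Polynomial 𝔽))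
    (η : Fin γ → (Fin γ → Polynomial 𝔽)) (d : Fin γ → ℕ)
    (hηJ : ∀ i, η i ∈ J)
    (hlm : ∀ i, IsLM le (η i) (d i, i)) :
    ∀ f : Fin γ → Polynomial 𝔽, ∃ g, f - g ∈ J ∧ ∀ m ∈ msupp g, m.1 < d m.2 := by
  classical
  have key : ∀ m : ℕ × Fin γ, ∀ f : Fin γ → Polynomial 𝔽,
      m ∈ msupp f → ¬ m.1 < d m.2 →
      (∀ a ∈ msupp f, ¬ a.1 < d a.2 → le a m) →
      ∃ g, f - g ∈ J ∧ ∀ a ∈ msupp g, a.1 < d a.2 := by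
    intro m
    induction m using WellFounded.induction hwf with
    | _ m IH =>
    obtain ⟨k, i⟩ := m
    intro f hmf hmbad hmax
    have hdk : d i ≤ k := not_lt.1 hmbad
    set a : 𝔽 := (η i i).coeff (d i) with ha_def
    have ha : a ≠ 0 := (hlm i).1
    set t : ℕ := k - d i with ht_def
    have htk : d i + t = k := by omega
    set c : 𝔽 := (f i).coeff k / a with hc_def
    set s : Polynomial 𝔽 := C c * X ^ t with hs_def
    set f' : Fin γ → Polynomial 𝔽 := f - s • η i with hf'_def
    -- coeff of s • η i
    have hcoeff_s : ∀ (j : Fin γ) (l : ℕ),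
        ((s • η i) j).coeff l = if t ≤ l then c * (η i j).coeff (l - t) else 0 := by
      intro j l
      have : (s • η i) j = (C c * η i j) * X ^ t := by
        show s * η i j = _
        rw [hs_def]; ring
      rw [this, Polynomial.coeff_mul_X_pow']
      split <;> simp [Polynomial.coeff_C_mul]
    -- the leading coefficient cancels
    have hlead : (f' i).coeff k = 0 := by
      have h1 : ((s • η i) i).coeff k = (f i).coeff k := by
        rw [hcoeff_s]
        have : k - t = d i := by omega
        rw [if_pos (by omega), this, ← ha_def, hc_def, div_mul_cancel₀ _ ha]
      have h2 : (f' i).coeff k = (f i).coeff k - ((s • η i) i).coeff k := by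
        rw [hf'_def]; simp [Pi.sub_apply, Polynomial.coeff_sub]
      rw [h2, h1, sub_self]
    -- bad monomials of f' are strictly dominated
    have hdom : ∀ a' ∈ msupp f', ¬ a'.1 < d a'.2 → le a' (k, i) ∧ a' ≠ (k, i) := by
      rintro ⟨l, j⟩ hm' hbad'
      have hne : (l, j) ≠ ((k : ℕ), i) := by
        intro h
        rw [Prod.ext_iff] at h
        obtain ⟨h1, h2⟩ := h
        simp only at h1 h2
        subst h1; subst h2
        exact hm' hlead
      refine ⟨?_, hne⟩
      have : (f j).coeff l ≠ 0 ∨ ((s • η i) j).coeff l ≠ 0 := by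
        by_contra hcon
        push_neg at hcon
        apply hm'
        show ((f - s • η i) j).coeff l = 0
        rw [Pi.sub_apply, Polynomial.coeff_sub, hcon.1, hcon.2, sub_self]
      rcases this with h | h
      · exact hmax (l, j) h hbad'
      · rw [hcoeff_s] at h
        by_cases hle : t ≤ l
        · rw [if_pos hle] at h
          have hb : ((l - t : ℕ), j) ∈ msupp (η i) := by
            intro h0
            apply h
            simp [h0]
          have := compat' le hcompat t (l - t) (d i) j i ((hlm i).2 _ hb)
          rw [Nat.sub_add_cancel hle, htk] at this
          exact this
        · rw [if_neg hle] at h; exact absurd rfl h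
    -- now recurse or finish
    by_cases hbad' : (((msupp_finite f').toFinset.filter fun a => ¬ a.1 < d a.2)).Nonempty
    · obtain ⟨m'', hm''mem, hm''max⟩ := exists_max le hrefl htot htrans _ hbad'
      simp only [Finset.mem_filter, Set.Finite.mem_toFinset] at hm''mem
      have hrel := hdom m'' hm''mem.1 hm''mem.2
      have hmaxf' : ∀ a ∈ msupp f', ¬ a.1 < d a.2 → le a m'' := fun a haf' habad =>
        hm''max a (Finset.mem_filter.2 ⟨(msupp_finite f').mem_toFinset.2 haf', habad⟩)
      obtain ⟨g, hgJ, hgood⟩ := IH m'' hrel f' hm''mem.1 hm''mem.2 hmaxf'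
      refine ⟨g, ?_, hgood⟩
      have heq : f - g = s • η i + (f' - g) := by
        rw [hf'_def]; abel
      rw [heq]
      exact J.add_mem (J.smul_mem s (hηJ i)) hgJ
    · refine ⟨f', ?_, ?_⟩
      · have heq : f - f' = s • η i := by rw [hf'_def]; abel
        rw [heq]
        exact J.smul_mem s (hηJ i)
      · intro a haf'
        by_contra habad
        exact hbad' ⟨a, Finset.mem_filter.2 ⟨(msupp_finite f').mem_toFinset.2 haf', habad⟩⟩
  -- outer argument
  intro f
  by_cases hbad : (((msupp_finite f).toFinset.filter fun a => ¬ a.1 < d a.2)).Nonempty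
  · obtain ⟨m', hm'mem, hm'max⟩ := exists_max le hrefl htot htrans _ hbad
    simp only [Finset.mem_filter, Set.Finite.mem_toFinset] at hm'mem
    exact key m' f hm'mem.1 hm'mem.2 fun a haf habad =>
      hm'max a (Finset.mem_filter.2 ⟨(msupp_finite f).mem_toFinset.2 haf, habad⟩)
  · refine ⟨f, by simp [J.zero_mem], ?_⟩
    intro a haf
    by_contra habad
    exact hbad ⟨a, Finset.mem_filter.2 ⟨(msupp_finite f).mem_toFinset.2 haf, habad⟩⟩



lemma coeff_sum_mon (d : Fin γ → ℕ) (c : (Σ i : Fin γ, Fin (d i)) → 𝔽) (j : Fin γ) (l : ℕ) :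
    ((∑ p : Σ i : Fin γ, Fin (d i), c p • mon (𝔽 := 𝔽) (p.2 : ℕ) p.1) j).coeff l
      = if h : l < d j then c ⟨j, ⟨l, h⟩⟩ else 0 := by
  classical
  rw [Finset.sum_apply, Polynomial.finset_sum_coeff]
  have hterm : ∀ p : Σ i : Fin γ, Fin (d i),
      ((c p • mon (𝔽 := 𝔽) (p.2 : ℕ) p.1) j).coeff l
        = if j = p.1 ∧ l = (p.2 : ℕ) then c p else 0 := by
    intro p
    rw [Pi.smul_apply, Polynomial.coeff_smul, coeff_mon]
    split <;> simp
  rw [Finset.sum_congr rfl (fun p _ => hterm p)]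
  by_cases h : l < d j
  · rw [dif_pos h, Finset.sum_eq_single (⟨j, ⟨l, h⟩⟩ : Σ i : Fin γ, Fin (d i))]
    · rw [if_pos ⟨rfl, rfl⟩]
    · rintro ⟨i, kk⟩ - hne
      rw [if_neg]
      rintro ⟨rfl, hlk⟩
      apply hne
      subst hlk
      simp [Fin.eta]
    · intro hnm
      exact absurd (Finset.mem_univ _) hnm
  · rw [dif_neg h]
    apply Finset.sum_eq_zero
    rintro ⟨i, kk⟩ -
    rw [if_neg]
    rintro ⟨rfl, rfl⟩
    exact h kk.isLt

end SumAux

/-- if `{η_i : 0 ≤ i < γ}` is a Gröbner basis of `J = ker(ev)` over `𝔽[x]`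
with `deg_ȳ(LT(η_i)) = i` (i.e. `LM(η_i) = x^{d_i} ȳ_i`), then
`Σ_i deg_x(LT(η_i)) = n`.  `R̄` is identified with `𝔽[x]^γ` via the basis `ȳ`, and
`dim_𝔽 R̄/J = n` (evaluation at the `n` points is surjective). -/
theorem sum_xdeg_eta_eq_n
    {𝔽 : Type*} [Field 𝔽] {γ n : ℕ}
    (le : ℕ × Fin γ → ℕ × Fin γ → Prop)
    (hrefl : ∀ m, le m m)
    (htot : ∀ m m', le m m' ∨ le m' m)
    (htrans : ∀ a b c, le a b → le b c → le a c)
    (hanti : ∀ a b, le a b → le b a → a = b)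
    (hcompat : ∀ (k k' : ℕ) (j j' : Fin γ), le (k, j) (k', j') → le (k + 1, j) (k' + 1, j'))
    (hxgt : ∀ (k : ℕ) (j : Fin γ), le (k, j) (k + 1, j))
    (hwf : WellFounded (fun a b => le a b ∧ a ≠ b))
    (J : Submodule (Polynomial 𝔽) (Fin γ → Polynomial 𝔽))
    (η : Fin γ → (Fin γ → Polynomial 𝔽)) (d : Fin γ → ℕ)
    (hηJ : ∀ i, η i ∈ J)
    (hlm : ∀ i, IsLM le (η i) (d i, i))
    (hGB : ∀ f ∈ J, f ≠ 0 → ∀ m, IsLM le f m → ∃ i, m.2 = i ∧ d i ≤ m.1)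
    (hdim : Module.finrank 𝔽 ((Fin γ → Polynomial 𝔽) ⧸ J.restrictScalars 𝔽) = n) :
    ∑ i, d i = n := by
  classical
  let ι := Σ i : Fin γ, Fin (d i)
  let bq : ι → (Fin γ → Polynomial 𝔽) ⧸ J.restrictScalars 𝔽 := fun p =>
    Submodule.Quotient.mk (SumAux.mon ((p.2 : ℕ)) p.1)
  have hli : LinearIndependent 𝔽 bq := by
    rw [Fintype.linearIndependent_iff]
    intro c hc p₀
    by_contra hp₀
    set h : Fin γ → Polynomial 𝔽 := ∑ p : ι, c p • SumAux.mon ((p.2 : ℕ)) p.1 with hh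
    have hmem : h ∈ J := by
      have h0 : (J.restrictScalars 𝔽).mkQ h = 0 := by
        rw [hh, map_sum]
        simp only [map_smul, Submodule.mkQ_apply]
        exact hc
      rwa [Submodule.mkQ_apply, Submodule.Quotient.mk_eq_zero,
        Submodule.restrictScalars_mem] at h0
    have hsupp : ∀ m ∈ msupp h, m.1 < d m.2 := by
      rintro ⟨l, j⟩ hm
      by_contra hx
      have hc0 : (h j).coeff l = 0 := by
        rw [hh, SumAux.coeff_sum_mon, dif_neg hx]
      exact hm hc0
    have hne : (((p₀.2 : ℕ)), p₀.1) ∈ msupp h := by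
      obtain ⟨i₀, k₀⟩ := p₀
      show (h i₀).coeff (k₀ : ℕ) ≠ 0
      rw [hh, SumAux.coeff_sum_mon, dif_pos k₀.isLt]
      simpa [Fin.eta] using hp₀
    have hne0 : h ≠ 0 := by
      intro h0
      rw [h0] at hne
      exact hne (by simp [msupp])
    obtain ⟨m, hmmem, hmmax⟩ := SumAux.exists_max le hrefl htot htrans
      (SumAux.msupp_finite h).toFinset
      ⟨_, (SumAux.msupp_finite h).mem_toFinset.2 hne⟩
    rw [Set.Finite.mem_toFinset] at hmmem
    obtain ⟨i, hi2, hdi⟩ := hGB h hmem hne0 m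
      ⟨hmmem, fun m' hm' => hmmax m' ((SumAux.msupp_finite h).mem_toFinset.2 hm')⟩
    have hlt := hsupp m hmmem
    rw [hi2] at hlt
    omega
  have hsp : ⊤ ≤ Submodule.span 𝔽 (Set.range bq) := by
    rintro q -
    obtain ⟨f, rfl⟩ := Submodule.Quotient.mk_surjective (J.restrictScalars 𝔽) q
    obtain ⟨g, hgJ, hgood⟩ := SumAux.reduce le hrefl htot htrans hcompat hwf J η d hηJ hlm f
    have hfg : (Submodule.Quotient.mk f :
        (Fin γ → Polynomial 𝔽) ⧸ J.restrictScalars 𝔽) = Submodule.Quotient.mk g :=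
      (Submodule.Quotient.eq _).2 ((Submodule.restrictScalars_mem 𝔽 J _).2 hgJ)
    rw [hfg]
    have hgeq : g = ∑ p : ι, ((g p.1).coeff ((p.2 : ℕ))) • SumAux.mon ((p.2 : ℕ)) p.1 := by
      funext j
      apply Polynomial.ext
      intro l
      rw [SumAux.coeff_sum_mon]
      split
      · rfl
      · rename_i hx
        by_contra hc0
        exact hx (hgood (l, j) hc0)
    rw [hgeq, ← Submodule.mkQ_apply, map_sum]
    refine Submodule.sum_mem _ fun p _ => ?_
    rw [map_smul]
    exact Submodule.smul_mem _ _
      (Submodule.subset_span ⟨p, by rw [Submodule.mkQ_apply]⟩)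
  have hcard := Module.finrank_eq_card_basis (Module.Basis.mk hli hsp)
  rw [hdim] at hcard
  rw [hcard]
  simp [ι, Fintype.card_sigma, Fintype.card_fin]
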